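/- arXiv:1909.06587 — 6 statements merged into one kernel-verified Lean document; each statement's English description precedes it below -/
import Mathlib

section
/- Let μ, ν be reals with μ + ν = 1 and 0 < ν < 1/2 < μ, let n ≥ 4 be a real, let Δ ≥ 1 be a natural number, and let ε₁ be a constant with 0 < ε₁ < 1. Suppose p > 0 satisfies p·n ≤ ε₁·ln(μ/ν) / ((ln(μ/ν) + 1)·μ). Then for every real δ₅ > ε₁·ln(μ/ν) / (1 + (1-ε₁)·ln(μ/ν)) and for δ₁ := (1+δ₅)·(1 - ε₁·ln(μ/ν)/(ln(μ/ν)+1)) - 1, one has δ₅ > 0, δ₁ > 0, and ((1+δ₁)/(1 - p·μ·n))^(1/(2Δ)) ≤ 1 + δ₅/(2Δ). -/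
/-!
With `L = log (μ / ν) > 0` and `A = ε₁ L / (L + 1) ∈ (0, 1)`, the lower bound on `δ₅` is
exactly `(1 + δ₅)(1 - A) > 1`, i.e. `δ₁ > 0`, and the bound on `p` says `p μ n ≤ A`. Hence the
base `(1 + δ₁) / (1 - p μ n)` is at most `1 + δ₅`, and Bernoulli's inequality
`(1 + x) ^ r ≤ 1 + r x` for `0 ≤ r ≤ 1` gives the claim with `r = 1 / (2Δ)`.
-/

open Real

lemma one_lt_one_add_mul_one_sub_div {ε L δ : ℝ} (hL : 0 < L) (hε : ε < 1)
    (hδ : ε * L / (1 + (1 - ε) * L) < δ) : 1 < (1 + δ) * (1 - ε * L / (L + 1)) := by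
  have hL1 : 0 < L + 1 := by linarith
  rw [div_lt_iff₀ (by nlinarith)] at hδ
  rw [one_sub_div hL1.ne', ← mul_div_assoc, lt_div_iff₀ hL1]
  linarith

lemma mul_div_le_self_of_le {a c d : ℝ} (ha : 0 ≤ a) (hd : 0 < d) (hcd : c ≤ d) :
    a * c / d ≤ a := by
  rw [mul_div_assoc]
  exact mul_le_of_le_one_right ha (div_le_one_of_le₀ hcd hd.le)

lemma rpow_one_div_le_one_add_div {b x t : ℝ} (hb : 0 ≤ b) (hbx : b ≤ 1 + x) (ht : 1 ≤ t) :
    b ^ (1 / t) ≤ 1 + x / t :=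
  calc b ^ (1 / t) ≤ (1 + x) ^ (1 / t) := rpow_le_rpow hb hbx (by positivity)
    _ ≤ 1 + 1 / t * x :=
      rpow_one_add_le_one_add_mul_self (by linarith) (by positivity)
        (div_le_one_of_le₀ ht (by linarith))
    _ = 1 + x / t := by ring

theorem stmt_1_general (μ ν n p ε₁ : ℝ) (Δ : ℕ)
    (hν0 : 0 < ν) (hν : ν < 1/2) (hμ : 1/2 < μ)
    (hΔ : 1 ≤ Δ) (hε₁ : 0 < ε₁) (hε₁' : ε₁ < 1)
    (hpn : p * n ≤ ε₁ * Real.log (μ / ν) / ((Real.log (μ / ν) + 1) * μ)) :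
    ∀ δ₅ : ℝ, δ₅ > ε₁ * Real.log (μ / ν) / (1 + (1 - ε₁) * Real.log (μ / ν)) →
      0 < δ₅ ∧
      0 < (1 + δ₅) * (1 - ε₁ * Real.log (μ / ν) / (Real.log (μ / ν) + 1)) - 1 ∧
      ((1 + ((1 + δ₅) * (1 - ε₁ * Real.log (μ / ν) / (Real.log (μ / ν) + 1)) - 1))
          / (1 - p * μ * n)) ^ (1 / (2 * (Δ : ℝ)))
        ≤ 1 + δ₅ / (2 * (Δ : ℝ)) := by
  intro δ₅ hδ₅
  set L := Real.log (μ / ν)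
  have hμ0 : 0 < μ := by linarith
  have hL : 0 < L := log_pos (by rw [one_lt_div hν0]; linarith)
  have hgain := one_lt_one_add_mul_one_sub_div hL hε₁' hδ₅
  have hδ₅_pos : 0 < δ₅ := lt_trans (div_pos (by positivity) (by nlinarith)) hδ₅
  have hpμn : p * μ * n ≤ ε₁ * L / (L + 1) := by
    rw [le_div_iff₀ (by positivity)] at hpn ⊢
    linarith
  have hA : ε₁ * L / (L + 1) < 1 := by rw [div_lt_one (by positivity)]; nlinarith
  refine ⟨hδ₅_pos, by linarith, ?_⟩
  rw [add_sub_cancel]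
  apply rpow_one_div_le_one_add_div (div_nonneg (by linarith) (by linarith))
  · exact mul_div_le_self_of_le (by positivity) (by linarith) (by linarith)
  · have : (1 : ℝ) ≤ Δ := by exact_mod_cast hΔ
    linarith

theorem stmt_1 (μ ν n p ε₁ : ℝ) (Δ : ℕ)
    (hμν : μ + ν = 1) (hν0 : 0 < ν) (hν : ν < 1/2) (hμ : 1/2 < μ)
    (hn : 4 ≤ n) (hΔ : 1 ≤ Δ) (hε₁ : 0 < ε₁) (hε₁' : ε₁ < 1)
    (hp : 0 < p)
    (hpn : p * n ≤ ε₁ * Real.log (μ / ν) / ((Real.log (μ / ν) + 1) * μ)) :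
    ∀ δ₅ : ℝ, δ₅ > ε₁ * Real.log (μ / ν) / (1 + (1 - ε₁) * Real.log (μ / ν)) →
      0 < δ₅ ∧
      0 < (1 + δ₅) * (1 - ε₁ * Real.log (μ / ν) / (Real.log (μ / ν) + 1)) - 1 ∧
      ((1 + ((1 + δ₅) * (1 - ε₁ * Real.log (μ / ν) / (Real.log (μ / ν) + 1)) - 1))
          / (1 - p * μ * n)) ^ (1 / (2 * (Δ : ℝ)))
        ≤ 1 + δ₅ / (2 * (Δ : ℝ)) :=
  stmt_1_general μ ν n p ε₁ Δ hν0 hν hμ hΔ hε₁ hε₁' hpn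
end

section
/- Let μ, ν be reals with μ + ν = 1 and 0 < ν < 1/2 < μ, let n ≥ 4 be a real, let Δ ≥ 1 be a natural number, and let δ₅ be a real with 0 < δ₅ < ln(μ/ν). Then μ / ( Δ·( 1 - (1 + δ₅/(2Δ))·(ν/μ)^(1/(2Δ)) ) ) ≥ 1 / ( n·Δ·( 1 - ((1 + δ₅/(2Δ))·(ν/μ)^(1/(2Δ)))^(1/(μn)) ) ), where both denominators are positive. -/
/-!
Write `x = (1 + δ₅/(2Δ)) (ν/μ)^(1/(2Δ))`. Since `1 + t ≤ exp t`, the hypothesis `δ₅ < log (μ/ν)` gives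
`1 + δ₅/(2Δ) < (μ/ν)^(1/(2Δ))`, i.e. `0 < x < 1`. Bernoulli's inequality applied to `y = x^(1/c)` with
`c = μn ≥ 1` gives `1 - x ≤ c (1 - y)`, which after clearing the positive denominators is the claim.
-/

open Real

lemma one_add_mul_mul_rpow_lt_one {δ r x : ℝ} (hx : 0 < x) (hr : 0 < r) (hδ : δ < log x⁻¹) :
    (1 + δ * r) * x ^ r < 1 := by
  have hxr : 0 < x ^ r := rpow_pos_of_pos hx r
  have hlt : 1 + δ * r < x⁻¹ ^ r :=
    calc 1 + δ * r ≤ exp (δ * r) := by linarith [add_one_le_exp (δ * r)]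
      _ < exp (log x⁻¹ * r) := exp_lt_exp.2 (mul_lt_mul_of_pos_right hδ hr)
      _ = x⁻¹ ^ r := by rw [rpow_def_of_pos (inv_pos.2 hx)]
  calc (1 + δ * r) * x ^ r < x⁻¹ ^ r * x ^ r := mul_lt_mul_of_pos_right hlt hxr
    _ = 1 := by rw [← mul_rpow (inv_nonneg.2 hx.le) hx.le, inv_mul_cancel₀ hx.ne', one_rpow]

lemma one_sub_le_mul_one_sub_rpow_inv {x c : ℝ} (hx : 0 ≤ x) (hc : 1 ≤ c) :
    1 - x ≤ c * (1 - x ^ c⁻¹) := by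
  have hroot : (x ^ c⁻¹) ^ c = x := by
    rw [← rpow_mul hx, inv_mul_cancel₀ (by linarith), rpow_one]
  have hbern := one_add_mul_self_le_rpow_one_add
    (by linarith [rpow_nonneg hx c⁻¹] : (-1 : ℝ) ≤ x ^ c⁻¹ - 1) hc
  rw [add_sub_cancel, hroot] at hbern
  linarith

theorem stmt_4_general (μ ν δ₅ n : ℝ) (Δ : ℕ)
    (hν0 : 0 < ν) (hμ : 1/2 < μ)
    (hn : 4 ≤ n) (hΔ : 1 ≤ Δ)
    (hδ₅ : 0 < δ₅) (hδ₅' : δ₅ < Real.log (μ / ν)) :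
    0 < (Δ : ℝ) * (1 - (1 + δ₅ / (2 * (Δ : ℝ))) * (ν / μ) ^ (1 / (2 * (Δ : ℝ)))) ∧
    0 < (n * (Δ : ℝ)) *
        (1 - ((1 + δ₅ / (2 * (Δ : ℝ))) * (ν / μ) ^ (1 / (2 * (Δ : ℝ)))) ^ (1 / (μ * n))) ∧
    μ / ((Δ : ℝ) * (1 - (1 + δ₅ / (2 * (Δ : ℝ))) * (ν / μ) ^ (1 / (2 * (Δ : ℝ)))))
      ≥ 1 / ((n * (Δ : ℝ)) *
        (1 - ((1 + δ₅ / (2 * (Δ : ℝ))) * (ν / μ) ^ (1 / (2 * (Δ : ℝ)))) ^ (1 / (μ * n)))) := by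
  have hμ0 : 0 < μ := by linarith
  have hΔ0 : (0 : ℝ) < Δ := Nat.cast_pos.2 hΔ
  set x := (1 + δ₅ / (2 * (Δ : ℝ))) * (ν / μ) ^ (1 / (2 * (Δ : ℝ)))
  have hx0 : 0 ≤ x := by positivity
  have hx1 : x < 1 := by
    have h := one_add_mul_mul_rpow_lt_one (δ := δ₅) (div_pos hν0 hμ0)
      (by positivity : 0 < 1 / (2 * (Δ : ℝ))) (by rwa [inv_div])
    rwa [← div_eq_mul_one_div] at h
  have hc : 1 ≤ μ * n := by nlinarith
  have hbern := one_sub_le_mul_one_sub_rpow_inv hx0 hc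
  rw [← one_div] at hbern
  have hy1 : x ^ (1 / (μ * n)) < 1 := rpow_lt_one hx0 hx1 (by positivity)
  have hA : 0 < (Δ : ℝ) * (1 - x) := mul_pos hΔ0 (by linarith)
  have hB : 0 < n * Δ * (1 - x ^ (1 / (μ * n))) := mul_pos (by positivity) (by linarith)
  refine ⟨hA, hB, ?_⟩
  rw [ge_iff_le, div_le_div_iff₀ hB hA]
  linear_combination mul_le_mul_of_nonneg_left hbern hΔ0.le

theorem stmt_4 (μ ν δ₅ n : ℝ) (Δ : ℕ)
    (hμν : μ + ν = 1) (hν0 : 0 < ν) (hν : ν < 1/2) (hμ : 1/2 < μ)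
    (hn : 4 ≤ n) (hΔ : 1 ≤ Δ)
    (hδ₅ : 0 < δ₅) (hδ₅' : δ₅ < Real.log (μ / ν)) :
    0 < (Δ : ℝ) * (1 - (1 + δ₅ / (2 * (Δ : ℝ))) * (ν / μ) ^ (1 / (2 * (Δ : ℝ)))) ∧
    0 < (n * (Δ : ℝ)) *
        (1 - ((1 + δ₅ / (2 * (Δ : ℝ))) * (ν / μ) ^ (1 / (2 * (Δ : ℝ)))) ^ (1 / (μ * n))) ∧
    μ / ((Δ : ℝ) * (1 - (1 + δ₅ / (2 * (Δ : ℝ))) * (ν / μ) ^ (1 / (2 * (Δ : ℝ)))))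
      ≥ 1 / ((n * (Δ : ℝ)) *
        (1 - ((1 + δ₅ / (2 * (Δ : ℝ))) * (ν / μ) ^ (1 / (2 * (Δ : ℝ)))) ^ (1 / (μ * n)))) :=
  stmt_4_general μ ν δ₅ n Δ hν0 hμ hn hΔ hδ₅ hδ₅'
end

section
/- Let μ, ν be reals with 0 < ν < μ, let Δ ≥ 1 be a natural number, and let δ₅ be a real with 0 < δ₅ < ln(μ/ν). Then (1 / (1 - (ν/μ)^(1/(2Δ)))) · (1 + δ₅/(ln(μ/ν) - δ₅)) > 1 / (1 - (1 + δ₅/(2Δ))·(ν/μ)^(1/(2Δ))). -/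
open Real

theorem stmt_5 (μ ν δ₅ : ℝ) (Δ : ℕ)
    (hν0 : 0 < ν) (hνμ : ν < μ) (hΔ : 1 ≤ Δ)
    (hδ₅ : 0 < δ₅) (hδ₅' : δ₅ < Real.log (μ / ν)) :
    (1 / (1 - (ν / μ) ^ (1 / (2 * (Δ : ℝ))))) * (1 + δ₅ / (Real.log (μ / ν) - δ₅))
      > 1 / (1 - (1 + δ₅ / (2 * (Δ : ℝ))) * (ν / μ) ^ (1 / (2 * (Δ : ℝ)))) := by
  have hμ : 0 < μ := hν0.trans hνμ
  set L := Real.log (μ / ν) with hLdef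
  have hL : 0 < L := hδ₅.trans hδ₅'
  have hΔR : (0:ℝ) < 2 * (Δ : ℝ) := by
    have : (1:ℝ) ≤ (Δ : ℝ) := by exact_mod_cast hΔ
    linarith
  set x := L / (2 * (Δ : ℝ)) with hxdef
  set t := δ₅ / (2 * (Δ : ℝ)) with htdef
  have hx : 0 < x := div_pos hL hΔR
  have ht : 0 < t := div_pos hδ₅ hΔR
  have htx : t < x := by
    rw [hxdef, htdef]
    gcongr
  -- rewrite the rpow as an exponential
  have hbase : 0 < ν / μ := div_pos hν0 hμ
  have hlogbase : Real.log (ν / μ) = -L := by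
    rw [hLdef, Real.log_div hν0.ne' hμ.ne', Real.log_div hμ.ne' hν0.ne']
    ring
  have hr : (ν / μ) ^ (1 / (2 * (Δ : ℝ))) = Real.exp (-x) := by
    rw [Real.rpow_def_of_pos hbase, hlogbase, hxdef]
    ring_nf
  set r := Real.exp (-x) with hrdef
  have hr0 : 0 < r := Real.exp_pos _
  have hkey : (1 + x) * r < 1 := by
    have h1 : 1 + x < Real.exp x := by
      have := Real.add_one_lt_exp (x := x) (by positivity)
      linarith
    have : (1 + x) * r < Real.exp x * r := by
      exact mul_lt_mul_of_pos_right h1 hr0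
    rw [hrdef, ← Real.exp_add] at this
    simpa using this
  have hr1 : r < 1 := by nlinarith
  have hD1 : 0 < 1 - r := by linarith
  have hD2 : 0 < 1 - (1 + t) * r := by nlinarith
  have hLδ : 0 < L - δ₅ := by linarith
  rw [hr]
  rw [gt_iff_lt, div_lt_iff₀ hD2]
  have hA : 1 + δ₅ / (L - δ₅) = L / (L - δ₅) := by
    field_simp
    ring
  rw [hA]
  have hLt : L * t = δ₅ * x := by rw [htdef, hxdef]; ring
  rw [div_mul_div_comm, div_mul_eq_mul_div, lt_div_iff₀ (by positivity : 0 < (1 - r) * (L - δ₅))]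
  nlinarith [mul_pos hδ₅ (by nlinarith : (0:ℝ) < 1 - (1 + x) * r)]
end

section
/- Let μ, ν be reals with 0 < ν < μ and let Δ ≥ 1 be a natural number. Then 2/ln(μ/ν) ≤ 1 / ( Δ·(1 - (ν/μ)^(1/(2Δ))) ) ≤ 2/ln(μ/ν) + 1/Δ. -/
/-! With `u = log (μ/ν) / (2Δ)` we have `(ν/μ)^(1/(2Δ)) = exp (-u)` and `2 / log (μ/ν) = 1 / (Δ u)`,
so after factoring out `1/Δ` both bounds are `1/u ≤ 1/(1 - e^{-u}) ≤ 1/u + 1`, i.e. the two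
consequences `1 - e^{-u} ≤ u` and `(1 + u) e^{-u} ≤ 1` of `1 + x ≤ e^x`. -/

open Real

namespace Real

lemma one_sub_exp_neg_le (u : ℝ) : 1 - exp (-u) ≤ u := by
  linarith [add_one_le_exp (-u)]

lemma one_add_mul_exp_neg_le_one (u : ℝ) : (1 + u) * exp (-u) ≤ 1 := by
  calc (1 + u) * exp (-u) ≤ exp u * exp (-u) := by
        gcongr
        linarith [add_one_le_exp u]
    _ = 1 := by rw [← exp_add, add_neg_cancel, exp_zero]

lemma inv_le_inv_one_sub_exp_neg {u : ℝ} (hu : 0 < u) : u⁻¹ ≤ (1 - exp (-u))⁻¹ := by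
  have : 0 < 1 - exp (-u) := by simpa using hu
  exact inv_anti₀ this (one_sub_exp_neg_le u)

lemma inv_one_sub_exp_neg_le {u : ℝ} (hu : 0 < u) : (1 - exp (-u))⁻¹ ≤ u⁻¹ + 1 := by
  have hpos : 0 < 1 - exp (-u) := by simpa using hu
  rw [inv_le_iff_one_le_mul₀' hpos, ← one_div, div_add_one hu.ne', mul_div_assoc', le_div_iff₀ hu]
  linarith [one_add_mul_exp_neg_le_one u]

lemma rpow_eq_exp_neg_mul_log_inv {x : ℝ} (hx : 0 < x) (t : ℝ) :
    x ^ t = exp (-(t * log x⁻¹)) := by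
  rw [rpow_def_of_pos hx, log_inv, mul_neg, neg_neg, mul_comm]

end Real

theorem stmt_6 (μ ν : ℝ) (Δ : ℕ)
    (hν0 : 0 < ν) (hνμ : ν < μ) (hΔ : 1 ≤ Δ) :
    2 / Real.log (μ / ν) ≤ 1 / ((Δ : ℝ) * (1 - (ν / μ) ^ (1 / (2 * (Δ : ℝ))))) ∧
    1 / ((Δ : ℝ) * (1 - (ν / μ) ^ (1 / (2 * (Δ : ℝ)))))
      ≤ 2 / Real.log (μ / ν) + 1 / (Δ : ℝ) := by
  have hΔ0 : (0 : ℝ) < Δ := by exact_mod_cast hΔ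
  have hL : 0 < log (μ / ν) := log_pos ((one_lt_div hν0).2 hνμ)
  obtain ⟨u, hu_def⟩ : ∃ u, u = 1 / (2 * (Δ : ℝ)) * log (μ / ν) := ⟨_, rfl⟩
  have hu : 0 < u := by rw [hu_def]; positivity
  have hpow : (ν / μ) ^ (1 / (2 * (Δ : ℝ))) = exp (-u) := by
    rw [rpow_eq_exp_neg_mul_log_inv (div_pos hν0 (hν0.trans hνμ)), inv_div, hu_def]
  have hlog : 2 / log (μ / ν) = (Δ : ℝ)⁻¹ * u⁻¹ := by
    rw [hu_def]; field_simp
  rw [hpow, hlog, one_div, mul_inv, one_div, ← mul_add_one]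
  exact ⟨mul_le_mul_of_nonneg_left (inv_le_inv_one_sub_exp_neg hu) (inv_nonneg.2 hΔ0.le),
    mul_le_mul_of_nonneg_left (inv_one_sub_exp_neg_le hu) (inv_nonneg.2 hΔ0.le)⟩
end

section
/- Let Δ ≥ 2 be a real, let δ₁, δ₂ be positive reals with δ₁ + δ₂ < 1, let ν be a real satisfying 1/(1 + exp(Δ^δ₁)) ≤ ν ≤ 1/(1 + exp(1/(Δ^δ₂ - 1))), set μ := 1 - ν, let ε₂ > 0 be a real, and set ε₁ := Δ^(δ₁+δ₂-1). Then 0 < ε₁ < 1, and for every real c, if c ≥ (2μ/ln(μ/ν)) · (1+ε₂) · (1 + Δ^(δ₁-1)) / (1 - Δ^(δ₁+δ₂-1)), then c ≥ max{ (2μ/ln(μ/ν) + 1/Δ) · (1+ε₂)/(1-ε₁), (ln(μ/ν)+1)·μ / (ε₁·Δ·ln(μ/ν)) }. -/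
/-!
Write `L = log (μ/ν)`. The lower bound on `ν` gives `L ≤ Δ^δ₁`, the upper bound gives `ν < 1/2`,
hence `L > 0` and `2μ ≥ 1`. With `d = Δ^(δ₁-1) = Δ^δ₁/Δ` this yields `1/Δ ≤ (2μ/L)·d`, which bounds the
first term of the maximum. Since `ε₁Δ = Δ^(δ₁+δ₂)` dominates both `1` and `Δ^δ₁ ≥ L`, we get
`L + 1 ≤ 2ε₁Δ`, so the second term is at most `2μ/L`, and `(1+ε₂)(1+d)/(1-ε₁) ≥ 1`.
-/

open Real

lemma one_div_one_add_exp_lt_half {x : ℝ} (hx : 0 < x) : 1 / (1 + exp x) < 1 / 2 := by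
  rw [div_lt_div_iff₀ (by positivity) two_pos]
  linarith [one_lt_exp_iff.2 hx]

lemma log_one_sub_div_le_of_one_div_one_add_exp_le {ν a : ℝ} (hν : 1 / (1 + exp a) ≤ ν)
    (hν₁ : ν < 1) : log ((1 - ν) / ν) ≤ a := by
  have hν₀ : 0 < ν := (by positivity : (0 : ℝ) < 1 / (1 + exp a)).trans_le hν
  rw [div_le_iff₀ (by positivity)] at hν
  rw [log_le_iff_le_exp (div_pos (sub_pos.2 hν₁) hν₀), div_le_iff₀ hν₀]
  linarith

lemma two_mul_div_add_one_div_mul_le {L μ a Δ ε₁ ε₂ : ℝ} (hL : 0 < L) (hμ : 1 ≤ 2 * μ)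
    (hLa : L ≤ a) (hΔ : 0 < Δ) (hε₂ : 0 ≤ 1 + ε₂) (hε₁ : ε₁ ≤ 1) :
    (2 * μ / L + 1 / Δ) * ((1 + ε₂) / (1 - ε₁)) ≤
      2 * μ / L * (1 + ε₂) * (1 + a / Δ) / (1 - ε₁) := by
  have h_inv : 1 / Δ ≤ 2 * μ / L * (a / Δ) := by
    have hL2μa : L ≤ 2 * μ * a := by nlinarith
    rw [div_mul_div_comm, div_le_div_iff₀ hΔ (mul_pos hL hΔ)]
    nlinarith [mul_le_mul_of_nonneg_right hL2μa hΔ.le]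
  have hK : 0 ≤ (1 + ε₂) / (1 - ε₁) := div_nonneg hε₂ (sub_nonneg.2 hε₁)
  calc (2 * μ / L + 1 / Δ) * ((1 + ε₂) / (1 - ε₁))
      ≤ (2 * μ / L + 2 * μ / L * (a / Δ)) * ((1 + ε₂) / (1 - ε₁)) := by gcongr
    _ = 2 * μ / L * (1 + ε₂) * (1 + a / Δ) / (1 - ε₁) := by ring

lemma add_one_mul_div_le_two_mul_div_mul {L μ d ε₁ ε₂ Δ : ℝ} (hL : 0 < L) (hμ : 0 ≤ μ)
    (hLε : L + 1 ≤ 2 * (ε₁ * Δ)) (hε₁₀ : 0 ≤ ε₁) (hε₁ : ε₁ < 1) (hε₂ : 0 ≤ ε₂) (hd : 0 ≤ d) :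
    (L + 1) * μ / (ε₁ * Δ * L) ≤ 2 * μ / L * (1 + ε₂) * (1 + d) / (1 - ε₁) := by
  have hK : 1 ≤ (1 + ε₂) * (1 + d) / (1 - ε₁) := by
    rw [one_le_div (sub_pos.2 hε₁)]
    nlinarith
  calc (L + 1) * μ / (ε₁ * Δ * L)
      ≤ 2 * μ / L := by
        rw [div_le_div_iff₀ (by nlinarith) hL]
        nlinarith [mul_le_mul_of_nonneg_right hLε (mul_nonneg hμ hL.le)]
    _ ≤ 2 * μ / L * ((1 + ε₂) * (1 + d) / (1 - ε₁)) :=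
        le_mul_of_one_le_right (by positivity) hK
    _ = 2 * μ / L * (1 + ε₂) * (1 + d) / (1 - ε₁) := by ring

theorem stmt_9 (Δ δ₁ δ₂ ν μ ε₂ ε₁ : ℝ)
    (hΔ : 2 ≤ Δ) (hδ₁ : 0 < δ₁) (hδ₂ : 0 < δ₂) (hδ : δ₁ + δ₂ < 1)
    (hν₁ : 1 / (1 + Real.exp (Δ ^ δ₁)) ≤ ν)
    (hν₂ : ν ≤ 1 / (1 + Real.exp (1 / (Δ ^ δ₂ - 1))))
    (hμ : μ = 1 - ν) (hε₂ : 0 < ε₂)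
    (hε₁ : ε₁ = Δ ^ (δ₁ + δ₂ - 1)) :
    0 < ε₁ ∧ ε₁ < 1 ∧
    ∀ c : ℝ,
      c ≥ (2 * μ / Real.log (μ / ν)) * (1 + ε₂) * (1 + Δ ^ (δ₁ - 1)) / (1 - Δ ^ (δ₁ + δ₂ - 1)) →
      c ≥ max ((2 * μ / Real.log (μ / ν) + 1 / Δ) * ((1 + ε₂) / (1 - ε₁)))
              ((Real.log (μ / ν) + 1) * μ / (ε₁ * Δ * Real.log (μ / ν))) := by
  have hΔ₀ : 0 < Δ := by linarith
  have hΔ₁ : 1 < Δ := by linarith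
  have hε₁₀ : 0 < ε₁ := hε₁ ▸ rpow_pos_of_pos hΔ₀ _
  have hε₁₁ : ε₁ < 1 := hε₁ ▸ rpow_lt_one_of_one_lt_of_neg hΔ₁ (by linarith)
  have hν_half : ν < 1 / 2 :=
    hν₂.trans_lt (one_div_one_add_exp_lt_half (one_div_pos.2 (sub_pos.2 (one_lt_rpow hΔ₁ hδ₂))))
  have hν₀ : 0 < ν := (by positivity : (0 : ℝ) < 1 / (1 + exp (Δ ^ δ₁))).trans_le hν₁
  subst hμ
  have hL : 0 < log ((1 - ν) / ν) := log_pos (by rw [lt_div_iff₀ hν₀]; linarith)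
  have hLa : log ((1 - ν) / ν) ≤ Δ ^ δ₁ :=
    log_one_sub_div_le_of_one_div_one_add_exp_le hν₁ (by linarith)
  have hε₁Δ : ε₁ * Δ = Δ ^ (δ₁ + δ₂) := by
    rw [hε₁, rpow_sub_one hΔ₀.ne', div_mul_cancel₀ _ hΔ₀.ne']
  have hLε : log ((1 - ν) / ν) + 1 ≤ 2 * (ε₁ * Δ) := by
    have := rpow_le_rpow_of_exponent_le hΔ₁.le (by linarith : δ₁ ≤ δ₁ + δ₂)
    have := one_le_rpow hΔ₁.le (by linarith : 0 ≤ δ₁ + δ₂)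
    linarith
  refine ⟨hε₁₀, hε₁₁, fun c hc => ?_⟩
  rw [rpow_sub_one hΔ₀.ne', ← hε₁] at hc
  exact max_le
    ((two_mul_div_add_one_div_mul_le hL (by linarith) hLa hΔ₀ (by linarith) hε₁₁.le).trans hc)
    ((add_one_mul_div_le_two_mul_div_mul hL (by linarith) hLε hε₁₀.le hε₁₁ hε₂.le
      (by positivity)).trans hc)
end

section
/- Let λ be a real with 0 < λ < 1. Then the function f(x) := x / (1 - λ^x) is strictly monotone increasing on the interval (0, 1]. -/
/-!
Since `x ↦ λ ^ x` is strictly convex, its secant slope from `0`, `(λ ^ x - 1) / x`, is strictly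
increasing in `x`; for `λ < 1` this slope is negative on `(0, ∞)`, so
`x / (1 - λ ^ x) = -1 / ((λ ^ x - 1) / x)` is strictly increasing there.
-/

open Real

theorem strictConvexOn_rpow_left {b : ℝ} (hb₀ : 0 < b) (hb₁ : b ≠ 1) :
    StrictConvexOn ℝ Set.univ (fun x : ℝ => b ^ x) := by
  refine ⟨convex_univ, fun x _ y _ hxy s t hs ht hst => ?_⟩
  have hlog : log b ≠ 0 := log_ne_zero_of_pos_of_ne_one hb₀ hb₁
  have := strictConvexOn_exp.2 (Set.mem_univ (log b * x)) (Set.mem_univ (log b * y))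
    (by simpa [hlog] using hxy) hs ht hst
  simp only [rpow_def_of_pos hb₀, smul_eq_mul] at this ⊢
  convert this using 2
  ring

theorem strictMonoOn_div_one_sub_rpow {b : ℝ} (hb₀ : 0 < b) (hb₁ : b < 1) :
    StrictMonoOn (fun x : ℝ => x / (1 - b ^ x)) (Set.Ioi 0) := by
  intro x (hx : 0 < x) y (hy : 0 < y) hxy
  have hslope := (strictConvexOn_rpow_left hb₀ hb₁.ne).secant_strict_mono (Set.mem_univ 0)
    (Set.mem_univ x) (Set.mem_univ y) hx.ne' hy.ne' hxy
  simp only [rpow_zero, sub_zero] at hslope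
  have hy_neg : (b ^ y - 1) / y < 0 :=
    div_neg_of_neg_of_pos (sub_neg.2 (rpow_lt_one hb₀.le hb₁ hy)) hy
  have hrecip : ∀ z : ℝ, z / (1 - b ^ z) = -(1 / ((b ^ z - 1) / z)) := fun z => by
    rw [one_div_div, ← div_neg, neg_sub]
  simp only [hrecip]
  exact neg_lt_neg (one_div_lt_one_div_of_neg_of_lt hy_neg hslope)

theorem stmt_17 (lam : ℝ) (hlam0 : 0 < lam) (hlam1 : lam < 1) :
    StrictMonoOn (fun x : ℝ => x / (1 - lam ^ x)) (Set.Ioc 0 1) :=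
  (strictMonoOn_div_one_sub_rpow hlam0 hlam1).mono Set.Ioc_subset_Ioi_self
end
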